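/- For every b ∈ (0,1) with b ≠ 1/2, there exists a_b > 0 such that for every a > a_b the map f_{a,b} is Li–Yorke chaotic: there exists an uncountable set S ⊆ [0,1] such that for every pair of distinct points x, y ∈ S, liminf_{n→∞} |f_{a,b}^n(x) − f_{a,b}^n(y)| = 0 and limsup_{n→∞} |f_{a,b}^n(x) − f_{a,b}^n(y)| > 0. -/

import Mathlib

/-!
In the logit coordinate `x = sigmoid y` the map becomes `g y = y - a (sigmoid y - b)`. For
`b < 1/2` and `a` large, `I = [-L, L]` with `a = 16 eᴸ` and an interval `J` around `-a b`
form a horseshoe: `g` is expanding on `I`, `g I` covers `I ∪ J`, and `g J` covers `I`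
(the case `b > 1/2` is the mirror image under `y ↦ -y`). Every subset `A ⊆ ℕ` gives an orbit
that stays in `I` except at a sparse set of times encoding `A`, where it visits `J`, and in which
every bit of `A` recurs infinitely often. For `A ≠ B` the two orbits are infinitely often one in
`I` and the other in `J`, which keeps them apart, and they share ever longer stretches in `I`,
along which backward expansion brings them together.
-/

noncomputable def chaosMap (a b : ℝ) : ℝ → ℝ :=
  fun x => x / (x + (1 - x) * Real.exp (a * (x - b)))

open Real Set Filter

section Iterate

variable {X : Type*}

theorem exists_forall_le_iterate_mem {F : X → X} (K : ℕ → Set X)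
    (hcov : ∀ n, K (n + 1) ⊆ F '' K n) (N : ℕ) (hN : (K N).Nonempty) :
    ∃ x, ∀ n ≤ N, F^[n] x ∈ K n := by
  induction N generalizing K with
  | zero =>
    obtain ⟨x, hx⟩ := hN
    exact ⟨x, fun n hn => by rwa [Nat.le_zero.1 hn]⟩
  | succ N ih =>
    obtain ⟨y, hy⟩ := ih (fun n => K (n + 1)) (fun n => hcov (n + 1)) hN
    obtain ⟨x, hx, rfl⟩ := hcov 0 (hy 0 N.zero_le)
    refine ⟨x, fun n hn => ?_⟩
    cases n with
    | zero => exact hx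
    | succ n => rw [Function.iterate_succ_apply]; exact hy n (by omega)

theorem exists_forall_iterate_mem [TopologicalSpace X] [T2Space X] {F : X → X}
    (hF : Continuous F) {K : ℕ → Set X} (hK : ∀ n, IsCompact (K n)) (hne : ∀ n, (K n).Nonempty)
    (hcov : ∀ n, K (n + 1) ⊆ F '' K n) :
    ∃ x, ∀ n, F^[n] x ∈ K n := by
  let t : ℕ → Set X := fun N => {x | ∀ n ≤ N, F^[n] x ∈ K n}
  have ht : ∀ N, IsClosed (t N) := fun N => by
    simp only [t, ofPred_forall]
    exact isClosed_iInter fun n => isClosed_iInter fun _ =>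
      (hK n).isClosed.preimage (hF.iterate n)
  obtain ⟨x, hx⟩ := IsCompact.nonempty_iInter_of_sequence_nonempty_isCompact_isClosed t
    (fun N x hx n hn => hx n (by omega))
    (fun N => exists_forall_le_iterate_mem K hcov N (hne N))
    ((hK 0).of_isClosed_subset (ht 0) fun x hx => hx 0 le_rfl) ht
  exact ⟨x, fun n => mem_iInter.1 hx n n le_rfl⟩

theorem two_pow_mul_dist_iterate_le [PseudoMetricSpace X] {g : X → X} {I : Set X}
    (hexp : ∀ x ∈ I, ∀ y ∈ I, 2 * dist x y ≤ dist (g x) (g y)) {x y : X} {n m : ℕ}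
    (hx : ∀ j < m, g^[n + j] x ∈ I) (hy : ∀ j < m, g^[n + j] y ∈ I) :
    2 ^ m * dist (g^[n] x) (g^[n] y) ≤ dist (g^[n + m] x) (g^[n + m] y) := by
  induction m with
  | zero => simp
  | succ m ih =>
    calc 2 ^ (m + 1) * dist (g^[n] x) (g^[n] y)
        = 2 * (2 ^ m * dist (g^[n] x) (g^[n] y)) := by ring
      _ ≤ 2 * dist (g^[n + m] x) (g^[n + m] y) := by
        gcongr
        exact ih (fun j hj => hx j (by omega)) (fun j hj => hy j (by omega))
      _ ≤ dist (g (g^[n + m] x)) (g (g^[n + m] y)) :=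
        hexp _ (hx m (by omega)) _ (hy m (by omega))
      _ = dist (g^[n + (m + 1)] x) (g^[n + (m + 1)] y) := by
        rw [← add_assoc, Function.iterate_succ_apply', Function.iterate_succ_apply']

end Iterate

def signalTimes (A : Set ℕ) : Set ℕ := {n | ∃ k, (Nat.unpair k).1 ∈ A ∧ 2 ^ (k + 1) = n}

theorem two_pow_succ_mem_signalTimes {A : Set ℕ} {k : ℕ} :
    2 ^ (k + 1) ∈ signalTimes A ↔ (Nat.unpair k).1 ∈ A := by
  refine ⟨fun ⟨j, hj, hjk⟩ => ?_, fun hk => ⟨k, hk, rfl⟩⟩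
  obtain rfl : j = k := by have := Nat.pow_right_injective le_rfl hjk; omega
  exact hj

theorem notMem_signalTimes_of_lt_of_lt {A : Set ℕ} {k j : ℕ} (h₁ : 2 ^ (k + 1) < j)
    (h₂ : j < 2 ^ (k + 2)) : j ∉ signalTimes A := by
  rintro ⟨i, -, rfl⟩
  have := (Nat.pow_lt_pow_iff_right one_lt_two).1 h₁
  have := (Nat.pow_lt_pow_iff_right one_lt_two).1 h₂
  omega

theorem add_one_notMem_signalTimes {A B : Set ℕ} {n : ℕ} (hn : n ∈ signalTimes A) :
    n + 1 ∉ signalTimes B := by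
  obtain ⟨k, -, rfl⟩ := hn
  rintro ⟨j, -, hj⟩
  rw [pow_succ, pow_succ] at hj
  omega

theorem exists_forall_add_notMem_signalTimes (N m : ℕ) :
    ∃ n ≥ N, ∀ j ≤ m, ∀ A, n + j ∉ signalTimes A := by
  have := Nat.lt_two_pow_self (n := N + m + 1)
  refine ⟨2 ^ (N + m + 1) + 1, by omega, fun j hj A =>
    notMem_signalTimes_of_lt_of_lt (k := N + m) (by omega) ?_⟩
  rw [pow_succ 2 (N + m + 1)]
  omega

theorem frequently_not_iff_mem_signalTimes {A B : Set ℕ} (hAB : A ≠ B) :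
    ∃ᶠ n in atTop, ¬(n ∈ signalTimes A ↔ n ∈ signalTimes B) := by
  obtain ⟨i, hi⟩ : ∃ i, ¬(i ∈ A ↔ i ∈ B) := by
    by_contra! h
    exact hAB (Set.ext h)
  refine frequently_atTop.2 fun N => ⟨2 ^ (Nat.pair i N + 1), ?_, ?_⟩
  · have := Nat.right_le_pair i N
    have := Nat.lt_two_pow_self (n := Nat.pair i N + 1)
    omega
  · simpa only [two_pow_succ_mem_signalTimes, Nat.unpair_pair] using hi

section Horseshoe

variable {X : Type*} [MetricSpace X]

structure IsHorseshoe (g : X → X) (I J : Set X) : Prop where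
  continuous : Continuous g
  isCompact_I : IsCompact I
  isCompact_J : IsCompact J
  nonempty_I : I.Nonempty
  disjoint : Disjoint I J
  I_subset_image_I : I ⊆ g '' I
  J_subset_image_I : J ⊆ g '' I
  I_subset_image_J : I ⊆ g '' J
  expanding : ∀ x ∈ I, ∀ y ∈ I, 2 * dist x y ≤ dist (g x) (g y)

namespace IsHorseshoe

variable {g : X → X} {I J : Set X}

theorem conj (h : IsHorseshoe g I J) (e : X ≃ᵢ X) :
    IsHorseshoe (e ∘ g ∘ e.symm) (e '' I) (e '' J) := by
  have himage : ∀ s : Set X, (e ∘ g ∘ e.symm) '' (e '' s) = e '' (g '' s) := fun s => by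
    simp only [image_image, Function.comp_apply, IsometryEquiv.symm_apply_apply]
  refine ⟨e.continuous.comp (h.continuous.comp e.symm.continuous),
    h.isCompact_I.image e.continuous, h.isCompact_J.image e.continuous, h.nonempty_I.image e,
    (disjoint_image_iff e.injective).2 h.disjoint, ?_, ?_, ?_, ?_⟩
  · rw [himage]; exact image_mono h.I_subset_image_I
  · rw [himage]; exact image_mono h.J_subset_image_I
  · rw [himage]; exact image_mono h.I_subset_image_J
  · rintro _ ⟨x, hx, rfl⟩ _ ⟨y, hy, rfl⟩
    simpa only [Function.comp_apply, IsometryEquiv.symm_apply_apply, e.dist_eq]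
      using h.expanding x hx y hy

theorem exists_orbit (h : IsHorseshoe g I J) {E : Set ℕ} (hE : ∀ n ∈ E, n + 1 ∉ E) :
    ∃ x, (∀ n ∈ E, g^[n] x ∈ J) ∧ ∀ n ∉ E, g^[n] x ∈ I := by
  classical
  have hJ : J.Nonempty := by
    obtain ⟨x, hx⟩ := h.nonempty_I
    obtain ⟨y, hy, -⟩ := h.I_subset_image_J hx
    exact ⟨y, hy⟩
  obtain ⟨x, hx⟩ := exists_forall_iterate_mem h.continuous (K := fun n => if n ∈ E then J else I)
    (fun n => by split_ifs; exacts [h.isCompact_J, h.isCompact_I])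
    (fun n => by split_ifs; exacts [hJ, h.nonempty_I])
    (fun n => by
      by_cases hn : n ∈ E
      · simp only [hn, hE n hn, if_true, if_false]; exact h.I_subset_image_J
      · simp only [hn, if_false]; split_ifs; exacts [h.J_subset_image_I, h.I_subset_image_I])
  exact ⟨x, fun n hn => by simpa [hn] using hx n, fun n hn => by simpa [hn] using hx n⟩

theorem frequently_dist_iterate_lt (h : IsHorseshoe g I J) {A B : Set ℕ} {x y : X}
    (hx : ∀ n ∉ signalTimes A, g^[n] x ∈ I) (hy : ∀ n ∉ signalTimes B, g^[n] y ∈ I)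
    {ε : ℝ} (hε : 0 < ε) : ∃ᶠ n in atTop, dist (g^[n] x) (g^[n] y) < ε := by
  obtain ⟨m, hm⟩ := exists_nat_gt (Metric.diam I / ε)
  have hdiam : Metric.diam I < 2 ^ m * ε := by
    have : (m : ℝ) < 2 ^ m := by exact_mod_cast Nat.lt_two_pow_self
    rw [div_lt_iff₀ hε] at hm
    nlinarith
  refine frequently_atTop.2 fun N => ?_
  obtain ⟨n, hnN, hfree⟩ := exists_forall_add_notMem_signalTimes N m
  refine ⟨n, hnN, lt_of_mul_lt_mul_left ?_ (by positivity : (0 : ℝ) ≤ 2 ^ m)⟩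
  calc 2 ^ m * dist (g^[n] x) (g^[n] y)
      ≤ dist (g^[n + m] x) (g^[n + m] y) := two_pow_mul_dist_iterate_le h.expanding
        (fun j hj => hx _ (hfree j hj.le A)) (fun j hj => hy _ (hfree j hj.le B))
    _ ≤ Metric.diam I := Metric.dist_le_diam_of_mem h.isCompact_I.isBounded
        (hx _ (hfree m le_rfl A)) (hy _ (hfree m le_rfl B))
    _ < 2 ^ m * ε := hdiam

theorem exists_uncountable_scrambled (h : IsHorseshoe g I J) :
    ∃ T : Set X, ¬T.Countable ∧ ∀ x ∈ T, ∀ y ∈ T, x ≠ y →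
      (∀ ε > 0, ∃ᶠ n in atTop, dist (g^[n] x) (g^[n] y) < ε) ∧
      ∃ᶠ n in atTop, g^[n] x ∈ I ∧ g^[n] y ∈ J ∨ g^[n] x ∈ J ∧ g^[n] y ∈ I := by
  choose x hxJ hxI using fun A => h.exists_orbit (E := signalTimes A)
    fun n hn => add_one_notMem_signalTimes hn
  have hsep : ∀ {A B : Set ℕ}, A ≠ B → ∃ᶠ n in atTop,
      g^[n] (x A) ∈ I ∧ g^[n] (x B) ∈ J ∨ g^[n] (x A) ∈ J ∧ g^[n] (x B) ∈ I := fun {A B} hAB =>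
    (frequently_not_iff_mem_signalTimes hAB).mono fun n hn => by
      by_cases hA : n ∈ signalTimes A
      · exact Or.inr ⟨hxJ A n hA, hxI B n (by tauto)⟩
      · exact Or.inl ⟨hxI A n hA, hxJ B n (by tauto)⟩
  have hinj : Function.Injective x := fun A B hAB => by
    by_contra hne
    obtain ⟨n, hn⟩ := (hsep hne).exists
    rw [hAB] at hn
    rcases hn with hn | hn
    exacts [h.disjoint.ne_of_mem hn.1 hn.2 rfl, h.disjoint.ne_of_mem hn.2 hn.1 rfl]
  refine ⟨range x, fun hc => ?_, ?_⟩
  · have : Countable (Set ℕ) := countable_univ_iff.1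
      (countable_of_injective_of_countable_image hinj.injOn (by rwa [image_univ]))
    obtain ⟨f, hf⟩ := exists_surjective_nat (Set ℕ)
    exact Function.cantor_surjective f hf
  · rintro _ ⟨A, rfl⟩ _ ⟨B, rfl⟩ hne
    exact ⟨fun ε hε => h.frequently_dist_iterate_lt (hxI A) (hxI B) hε,
      hsep (ne_of_apply_ne x hne)⟩

end IsHorseshoe

end Horseshoe

theorem Convex.mul_dist_le_dist_of_deriv_le_neg {D : Set ℝ} (hD : Convex ℝ D) {f : ℝ → ℝ}
    (hf : Differentiable ℝ f) {K : ℝ} (hK : ∀ x ∈ interior D, deriv f x ≤ -K) :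
    ∀ x ∈ D, ∀ y ∈ D, K * dist x y ≤ dist (f x) (f y) := by
  intro x hx y hy
  wlog hxy : x ≤ y generalizing x y
  · rw [dist_comm x, dist_comm (f x)]
    exact this y hy x hx (le_of_not_ge hxy)
  have := hD.image_sub_le_mul_sub_of_deriv_le hf.continuous.continuousOn hf.differentiableOn hK
    x hx y hy hxy
  rw [Real.dist_eq, Real.dist_eq, abs_sub_comm, abs_of_nonneg (sub_nonneg.2 hxy)]
  exact le_trans (by linarith) (le_abs_self _)

theorem eventually_two_mul_log_add_le_mul {c : ℝ} (hc : 0 < c) (d : ℝ) :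
    ∀ᶠ x in atTop, 2 * log x + d ≤ c * x := by
  filter_upwards [((isLittleO_log_id_atTop.const_mul_left 2).add
    (Asymptotics.isLittleO_const_id_atTop d)).bound hc, eventually_ge_atTop 0] with x hx hx₀
  rw [Real.norm_eq_abs, Real.norm_eq_abs, id, abs_of_nonneg hx₀] at hx
  exact (le_abs_self _).trans hx

theorem liminf_eq_zero_of_frequently_lt {u : ℕ → ℝ} (h₀ : ∀ n, 0 ≤ u n) (h₁ : ∀ n, u n ≤ 1)
    (h : ∀ ε > 0, ∃ᶠ n in atTop, u n < ε) : liminf u atTop = 0 := by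
  refine le_antisymm (le_of_forall_pos_le_add fun ε hε => ?_)
    (le_liminf_of_le (isCoboundedUnder_ge_of_le _ h₁) (Eventually.of_forall h₀))
  rw [zero_add]
  exact liminf_le_of_frequently_le ((h ε hε).mono fun n hn => hn.le) (isBoundedUnder_of ⟨0, h₀⟩)

theorem limsup_pos_of_frequently_le {u : ℕ → ℝ} (h₁ : ∀ n, u n ≤ 1) {ρ : ℝ} (hρ : 0 < ρ)
    (h : ∃ᶠ n in atTop, ρ ≤ u n) : 0 < limsup u atTop :=
  hρ.trans_le (le_limsup_of_frequently_le h (isBoundedUnder_of ⟨1, h₁⟩))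

namespace Real

theorem sigmoid_le_exp (y : ℝ) : sigmoid y ≤ exp y := by
  rw [sigmoid_def, ← inv_inv (exp y), ← exp_neg]
  exact inv_anti₀ (exp_pos _) (le_add_of_nonneg_left zero_le_one)

theorem sigmoid_mul_one_sub_sigmoid (y : ℝ) :
    sigmoid y * (1 - sigmoid y) = (2 + exp y + exp (-y))⁻¹ := by
  rw [← sigmoid_neg, sigmoid_def, sigmoid_def, neg_neg, ← mul_inv, exp_neg]
  congr 1
  field_simp
  ring

theorem inv_four_mul_exp_abs_le_sigmoid_mul (y : ℝ) :
    (4 * exp |y|)⁻¹ ≤ sigmoid y * (1 - sigmoid y) := by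
  rw [sigmoid_mul_one_sub_sigmoid]
  refine inv_anti₀ (by positivity) ?_
  have := exp_le_exp.2 (le_abs_self y)
  have := exp_le_exp.2 (neg_le_abs y)
  have := one_le_exp (abs_nonneg y)
  linarith

theorem lipschitzWith_sigmoid : LipschitzWith 1 sigmoid :=
  lipschitzWith_of_nnnorm_deriv_le differentiable_sigmoid fun y => by
    rw [deriv_sigmoid, ← NNReal.coe_le_coe, coe_nnnorm, Real.norm_eq_abs, NNReal.coe_one, abs_le]
    constructor <;> nlinarith [sigmoid_pos y, sigmoid_lt_one y]

theorem exists_pos_le_abs_sigmoid_sub {I J : Set ℝ} (hI : IsCompact I) (hJ : IsCompact J)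
    (hIJ : Disjoint I J) : ∃ ρ > 0, ∀ p ∈ I, ∀ q ∈ J, ρ ≤ |sigmoid p - sigmoid q| := by
  obtain ⟨ρ, hρ, hle⟩ := (hI.prod hJ).exists_forall_le'
    (f := fun pq : ℝ × ℝ => |sigmoid pq.1 - sigmoid pq.2|)
    ((continuous_sigmoid.comp continuous_fst).sub
      (continuous_sigmoid.comp continuous_snd)).abs.continuousOn
    fun pq hpq => abs_pos.2 (sub_ne_zero.2 (sigmoid_injective.ne (hIJ.ne_of_mem hpq.1 hpq.2)))
  exact ⟨ρ, hρ, fun p hp q hq => hle (p, q) ⟨hp, hq⟩⟩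

end Real

noncomputable def chaosMapLogit (a b y : ℝ) : ℝ := y - a * (sigmoid y - b)

theorem chaosMap_sigmoid (a b y : ℝ) :
    chaosMap a b (sigmoid y) = sigmoid (chaosMapLogit a b y) := by
  have h : -(y - a * (sigmoid y - b)) = -y + a * (sigmoid y - b) := by ring
  rw [chaosMap, chaosMapLogit, sigmoid_def (y - _), h, exp_add]
  generalize exp (a * (sigmoid y - b)) = E
  rw [sigmoid_def]
  have := exp_pos (-y)
  field_simp
  ring

theorem chaosMap_iterate_sigmoid (a b y : ℝ) (n : ℕ) :
    (chaosMap a b)^[n] (sigmoid y) = sigmoid ((chaosMapLogit a b)^[n] y) :=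
  (Function.Semiconj.iterate_right (fun y => (chaosMap_sigmoid a b y).symm) n y).symm

theorem hasDerivAt_chaosMapLogit (a b y : ℝ) :
    HasDerivAt (chaosMapLogit a b) (1 - a * (sigmoid y * (1 - sigmoid y))) y :=
  (hasDerivAt_id y).sub (((hasDerivAt_sigmoid y).sub_const b).const_mul a)

theorem differentiable_chaosMapLogit (a b : ℝ) : Differentiable ℝ (chaosMapLogit a b) :=
  fun y => (hasDerivAt_chaosMapLogit a b y).differentiableAt

theorem neg_chaosMapLogit_neg (a b y : ℝ) :
    -chaosMapLogit a (1 - b) (-y) = chaosMapLogit a b y := by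
  rw [chaosMapLogit, chaosMapLogit, sigmoid_neg]
  ring

theorem deriv_chaosMapLogit_le {a b L y : ℝ} (ha : a = 16 * exp L) (hy : |y| ≤ L) :
    deriv (chaosMapLogit a b) y ≤ -2 := by
  rw [(hasDerivAt_chaosMapLogit a b y).deriv]
  have : 4 ≤ a * (sigmoid y * (1 - sigmoid y)) := calc
    (4 : ℝ) = a * (4 * exp L)⁻¹ := by rw [ha]; field_simp; norm_num
    _ ≤ a * (4 * exp |y|)⁻¹ := by rw [ha]; gcongr
    _ ≤ a * (sigmoid y * (1 - sigmoid y)) := by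
      rw [ha]; gcongr; exact inv_four_mul_exp_abs_le_sigmoid_mul y
  linarith

theorem mul_sigmoid_neg_le {a L : ℝ} (ha : a = 16 * exp L) : a * sigmoid (-L) ≤ 16 := calc
  a * sigmoid (-L) ≤ a * exp (-L) := by rw [ha]; gcongr; exact sigmoid_le_exp _
  _ = 16 := by rw [ha, mul_assoc, ← exp_add, add_neg_cancel, exp_zero, mul_one]

theorem mul_sigmoid_le_one {a b L : ℝ} (ha : a = 16 * exp L) (hb : 2 * L + 16 ≤ a * b) :
    a * sigmoid (L + 1 - a * b) ≤ 1 := calc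
  a * sigmoid (L + 1 - a * b) ≤ a * exp (L + 1 - a * b) := by
    rw [ha]; gcongr; exact sigmoid_le_exp _
  _ = 16 * exp (2 * L + 1 - a * b) := by rw [ha, mul_assoc, ← exp_add]; ring_nf
  _ ≤ 16 * exp (-15) := by gcongr; linarith
  _ ≤ 1 := by
    rw [exp_neg, mul_inv_le_iff₀ (exp_pos 15)]
    linarith [add_one_le_exp (15 : ℝ)]

theorem isHorseshoe_chaosMapLogit {a b L : ℝ} (hL : 0 ≤ L) (ha : a = 16 * exp L)
    (hb : 2 * L + 16 ≤ a * b) (hb' : 2 * L + 17 ≤ a * (1 - 2 * b)) :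
    IsHorseshoe (chaosMapLogit a b) (Icc (-L) L) (Icc (-L - 1 - a * b) (L + 1 - a * b)) := by
  have ha₀ : 0 < a := ha ▸ by positivity
  have hcont := (differentiable_chaosMapLogit a b).continuous
  have hσ := mul_sigmoid_neg_le ha
  have hleft : chaosMapLogit a b L ≤ -L - 1 - a * b := by
    rw [sigmoid_neg] at hσ
    simp only [chaosMapLogit]
    linarith
  have hright : L ≤ chaosMapLogit a b (-L) := by
    simp only [chaosMapLogit]
    linarith
  -- On `J` the term `a * sigmoid y` is negligible, so there `g` is nearly translation by `a * b`.
  have hJleft : chaosMapLogit a b (-L - 1 - a * b) ≤ -L := by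
    simp only [chaosMapLogit]
    linarith [mul_pos ha₀ (sigmoid_pos (-L - 1 - a * b))]
  have hJright : L ≤ chaosMapLogit a b (L + 1 - a * b) := by
    have := mul_sigmoid_le_one ha hb
    simp only [chaosMapLogit]
    linarith
  have hcovI : Icc (-L - 1 - a * b) L ⊆ chaosMapLogit a b '' Icc (-L) L :=
    (Icc_subset_Icc hleft hright).trans (intermediate_value_Icc' (by linarith) hcont.continuousOn)
  exact {
    continuous := hcont
    isCompact_I := isCompact_Icc
    isCompact_J := isCompact_Icc
    nonempty_I := nonempty_Icc.2 (by linarith)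
    disjoint := disjoint_left.2 fun z hz hz' => by linarith [hz.1, hz'.2]
    I_subset_image_I := (Icc_subset_Icc (by linarith) le_rfl).trans hcovI
    J_subset_image_I := (Icc_subset_Icc le_rfl (by linarith)).trans hcovI
    I_subset_image_J := (Icc_subset_Icc hJleft hJright).trans
      (intermediate_value_Icc (by linarith) hcont.continuousOn)
    expanding := (convex_Icc _ _).mul_dist_le_dist_of_deriv_le_neg
      (differentiable_chaosMapLogit a b) fun y hy => deriv_chaosMapLogit_le ha <| by
        rw [interior_Icc] at hy
        exact abs_le.2 ⟨hy.1.le, hy.2.le⟩ }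

theorem eventually_exists_isHorseshoe_of_lt_half {b : ℝ} (hb₀ : 0 < b) (hb : b < 1 / 2) :
    ∀ᶠ a in atTop, ∃ I J, IsHorseshoe (chaosMapLogit a b) I J := by
  filter_upwards [eventually_ge_atTop 16, eventually_two_mul_log_add_le_mul hb₀ 16,
    eventually_two_mul_log_add_le_mul (by linarith : 0 < 1 - 2 * b) 17] with a ha h₁ h₂
  have hlog : log (a / 16) ≤ log a := log_le_log (by positivity) (by linarith)
  have hL : 0 ≤ log (a / 16) := log_nonneg (by rwa [le_div_iff₀ (by norm_num), one_mul])
  exact ⟨_, _, isHorseshoe_chaosMapLogit hL (by rw [exp_log (by positivity)]; ring)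
    (by linarith) (by linarith)⟩

theorem eventually_exists_isHorseshoe {b : ℝ} (hb : b ∈ Ioo 0 1) (hb2 : b ≠ 1 / 2) :
    ∀ᶠ a in atTop, ∃ I J, IsHorseshoe (chaosMapLogit a b) I J := by
  rcases hb2.lt_or_gt with h | h
  · exact eventually_exists_isHorseshoe_of_lt_half hb.1 h
  · filter_upwards [eventually_exists_isHorseshoe_of_lt_half (b := 1 - b) (by linarith [hb.2])
      (by linarith)] with a ⟨I, J, hIJ⟩
    have hconj : IsometryEquiv.neg ℝ ∘ chaosMapLogit a (1 - b) ∘ (IsometryEquiv.neg ℝ).symm =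
        chaosMapLogit a b :=
      funext fun y => by simpa using neg_chaosMapLogit_neg a b y
    exact ⟨_, _, hconj ▸ hIJ.conj (IsometryEquiv.neg ℝ)⟩

def IsScrambled (f : ℝ → ℝ) (S : Set ℝ) : Prop :=
  ∀ x ∈ S, ∀ y ∈ S, x ≠ y →
    liminf (fun n : ℕ => |f^[n] x - f^[n] y|) atTop = 0 ∧
      0 < limsup (fun n : ℕ => |f^[n] x - f^[n] y|) atTop

theorem IsHorseshoe.exists_scrambled_chaosMap {a b : ℝ} {I J : Set ℝ}
    (h : IsHorseshoe (chaosMapLogit a b) I J) :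
    ∃ S ⊆ Icc (0 : ℝ) 1, ¬S.Countable ∧ IsScrambled (chaosMap a b) S := by
  obtain ⟨T, hT, hscr⟩ := h.exists_uncountable_scrambled
  obtain ⟨ρ, hρ, hsep⟩ := exists_pos_le_abs_sigmoid_sub h.isCompact_I h.isCompact_J h.disjoint
  refine ⟨sigmoid '' T, image_subset_iff.2 fun y _ => ⟨(sigmoid_pos y).le, (sigmoid_lt_one y).le⟩,
    fun hc => hT (countable_of_injective_of_countable_image sigmoid_injective.injOn hc), ?_⟩
  rintro _ ⟨x, hx, rfl⟩ _ ⟨y, hy, rfl⟩ hxy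
  obtain ⟨hclose, hfar⟩ := hscr x hx y hy (ne_of_apply_ne _ hxy)
  simp only [chaosMap_iterate_sigmoid]
  set g := chaosMapLogit a b
  have h₀ : ∀ n, 0 ≤ |sigmoid (g^[n] x) - sigmoid (g^[n] y)| := fun n => abs_nonneg _
  have h₁ : ∀ n, |sigmoid (g^[n] x) - sigmoid (g^[n] y)| ≤ 1 := fun n => abs_sub_le_iff.2
    ⟨by linarith [sigmoid_lt_one (g^[n] x), sigmoid_pos (g^[n] y)],
      by linarith [sigmoid_lt_one (g^[n] y), sigmoid_pos (g^[n] x)]⟩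
  refine ⟨liminf_eq_zero_of_frequently_lt h₀ h₁ fun ε hε => (hclose ε hε).mono fun n hn => ?_,
    limsup_pos_of_frequently_le h₁ hρ (hfar.mono fun n hn => ?_)⟩
  · have := lipschitzWith_sigmoid.dist_le_mul (g^[n] x) (g^[n] y)
    rw [NNReal.coe_one, one_mul, Real.dist_eq] at this
    exact this.trans_lt hn
  · rcases hn with ⟨hxI, hyJ⟩ | ⟨hxJ, hyI⟩
    · exact hsep _ hxI _ hyJ
    · exact abs_sub_comm (sigmoid _) (sigmoid _) ▸ hsep _ hyI _ hxJ

/-- For every `b ∈ (0,1)` with `b ≠ 1/2` there is `a_b > 0` such that for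
every `a > a_b` the map `f_{a,b}` is Li–Yorke chaotic: there is an uncountable
scrambled set `S ⊆ [0,1]`. -/
theorem stmt_14 (b : ℝ) (hb : b ∈ Set.Ioo (0 : ℝ) 1) (hb2 : b ≠ 1 / 2) :
    ∃ a_b : ℝ, 0 < a_b ∧ ∀ a : ℝ, a_b < a →
      ∃ S : Set ℝ, S ⊆ Set.Icc (0 : ℝ) 1 ∧ ¬ S.Countable ∧
        ∀ x ∈ S, ∀ y ∈ S, x ≠ y →
          Filter.liminf
            (fun n : ℕ => |(chaosMap a b)^[n] x - (chaosMap a b)^[n] y|)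
            Filter.atTop = 0 ∧
          0 < Filter.limsup
            (fun n : ℕ => |(chaosMap a b)^[n] x - (chaosMap a b)^[n] y|)
            Filter.atTop := by
  obtain ⟨N, hN⟩ := eventually_atTop.1 (eventually_exists_isHorseshoe hb hb2)
  refine ⟨max N 1, by positivity, fun a ha => ?_⟩
  obtain ⟨I, J, h⟩ := hN a ((le_max_left N 1).trans ha.le)
  exact h.exists_scrambled_chaosMap
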